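/- Let C_1, C_2, C_3 ⊆ F_q^4 be the codes with generator matrices G_1 = G_2 having rows (1,1,1,0) and (0,0,0,1), and G_3 the single row (1,1,1,0). Then k_1 + k_2 + k_3 = 5 > n = 4 but dmin(C_1*C_2*C_3) = 3 > max(t-1, n+t-(k_1+k_2+k_3)) = 2, so the conclusion of the product Singleton bound can fail without the support condition. -/

import Mathlib

/-!
The vectors e = (1,1,1,0) and f = (0,0,0,1) are orthogonal idempotents of `F⁴`, so
span{e, f} * span{e, f} = span{e, f} and span{e, f} * span{e} = span{e}. Hence the triple product
code is the line spanned by e, whose nonzero words all have Hamming weight 3.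
-/

noncomputable section

/-- The componentwise product code of two linear codes. -/
def prodCode (F : Type*) [Field F] {n : ℕ}
    (C C' : Submodule F (Fin n → F)) : Submodule F (Fin n → F) :=
  Submodule.span F {z | ∃ c ∈ C, ∃ c' ∈ C', z = c * c'}

/-- The t-fold componentwise power of a code (convention: 0th power is ⊤). -/
def powCode (F : Type*) [Field F] {n : ℕ} (C : Submodule F (Fin n → F)) :
    ℕ → Submodule F (Fin n → F)
  | 0 => ⊤
  | 1 => C
  | (t+2) => prodCode F (powCode F C (t+1)) C

/-- Minimum distance: minimum Hamming weight of a nonzero codeword. -/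
def dmin {F : Type*} [Field F] [DecidableEq F] {n : ℕ}
    (C : Submodule F (Fin n → F)) : ℕ :=
  sInf {w | ∃ c ∈ C, c ≠ 0 ∧ hammingNorm c = w}

/-- The dual code with respect to the standard bilinear form. -/
def dualCode (F : Type*) [Field F] {n : ℕ}
    (C : Submodule F (Fin n → F)) : Submodule F (Fin n → F) where
  carrier := {x | ∀ c ∈ C, ∑ i, x i * c i = 0}
  zero_mem' := by intro c hc; simp
  add_mem' := by
    intro a b ha hb c hc
    have h : ∑ i, (a + b) i * c i = (∑ i, a i * c i) + ∑ i, b i * c i := by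
      simp [add_mul, Finset.sum_add_distrib]
    simp only [Set.mem_setOf_eq] at *
    rw [h, ha c hc, hb c hc, add_zero]
  smul_mem' := by
    intro r a ha c hc
    simp only [Pi.smul_apply, smul_eq_mul, mul_assoc, ← Finset.mul_sum, Set.mem_setOf_eq] at *
    rw [ha c hc, mul_zero]

/-- A code has full support if every coordinate carries a nonzero codeword value. -/
def fullSupport (F : Type*) [Field F] {n : ℕ} (C : Submodule F (Fin n → F)) : Prop :=
  ∀ j, ∃ c ∈ C, c j ≠ 0

/-- Product code of a family of codes. -/
def prodFamily (F : Type*) [Field F] {n t : ℕ}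
    (C : Fin t → Submodule F (Fin n → F)) : Submodule F (Fin n → F) :=
  Submodule.span F {z | ∃ c : Fin t → (Fin n → F), (∀ i, c i ∈ C i) ∧ z = ∏ i, c i}


open Submodule

theorem prodCode_eq_mul {F : Type*} [Field F] {n : ℕ} (C C' : Submodule F (Fin n → F)) :
    prodCode F C C' = C * C' := by
  rw [mul_eq_span_mul_set, prodCode]
  congr 1
  ext z
  simp only [Set.mem_ofPred_eq, Set.mem_mul, SetLike.mem_coe, eq_comm]

section Idempotents

variable {R A : Type*} [CommSemiring R] [CommSemiring A] [Algebra R A] {e f : A}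

theorem span_singleton_mul_span_singleton (a b : A) :
    span R {a} * span R {b} = span R {a * b} := by
  rw [span_mul_span, Set.singleton_mul_singleton]

theorem IsIdempotentElem.span_singleton_mul_self (he : IsIdempotentElem e) :
    span R {e} * span R {e} = span R {e} := by
  rw [span_singleton_mul_span_singleton, he.eq]

theorem span_singleton_mul_span_singleton_eq_bot (hef : e * f = 0) :
    span R {e} * span R {f} = ⊥ := by
  rw [span_singleton_mul_span_singleton, hef, span_singleton_eq_bot.mpr rfl]

theorem span_pair_mul_self_of_orthogonal (he : IsIdempotentElem e) (hf : IsIdempotentElem f)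
    (hef : e * f = 0) : span R {e, f} * span R {e, f} = span R {e, f} := by
  have hfe : f * e = 0 := by rw [mul_comm, hef]
  rw [span_insert, Submodule.mul_sup, Submodule.sup_mul, Submodule.sup_mul,
    he.span_singleton_mul_self, hf.span_singleton_mul_self,
    span_singleton_mul_span_singleton_eq_bot hef,
    span_singleton_mul_span_singleton_eq_bot hfe, sup_bot_eq, bot_sup_eq]

theorem span_pair_mul_span_singleton_of_orthogonal (he : IsIdempotentElem e)
    (hef : e * f = 0) : span R {e, f} * span R {e} = span R {e} := by
  rw [span_insert, Submodule.sup_mul, he.span_singleton_mul_self,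
    span_singleton_mul_span_singleton_eq_bot (by rw [mul_comm, hef] : f * e = 0), sup_bot_eq]

end Idempotents

theorem linearIndependent_pair_of_orthogonal {K A : Type*} [Field K] [CommRing A] [Algebra K A]
    {e f : A} (he : IsIdempotentElem e) (hf : IsIdempotentElem f) (hef : e * f = 0)
    (he0 : e ≠ 0) (hf0 : f ≠ 0) : LinearIndependent K ![e, f] := by
  rw [LinearIndependent.pair_iff]
  intro s t hst
  have hs : s • e = 0 := by
    simpa [add_mul, smul_mul_assoc, he.eq, hef, mul_comm f e] using congrArg (· * e) hst
  have ht : t • f = 0 := by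
    simpa [add_mul, smul_mul_assoc, hf.eq, hef] using congrArg (· * f) hst
  exact ⟨(smul_eq_zero.mp hs).resolve_right he0, (smul_eq_zero.mp ht).resolve_right hf0⟩

theorem finrank_span_pair_of_orthogonal {K A : Type*} [Field K] [CommRing A] [Algebra K A]
    {e f : A} (he : IsIdempotentElem e) (hf : IsIdempotentElem f) (hef : e * f = 0)
    (he0 : e ≠ 0) (hf0 : f ≠ 0) : Module.finrank K (span K {e, f}) = 2 := by
  have := finrank_span_eq_card (linearIndependent_pair_of_orthogonal (K := K) he hf hef he0 hf0)
  rwa [Matrix.range_cons_cons_empty, Fintype.card_fin] at this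

theorem dmin_span_singleton {F : Type*} [Field F] [DecidableEq F] {n : ℕ} {v : Fin n → F}
    (hv : v ≠ 0) : dmin (span F {v}) = hammingNorm v := by
  have hweights : {w | ∃ c ∈ span F {v}, c ≠ 0 ∧ hammingNorm c = w} = {hammingNorm v} := by
    ext w
    simp only [Set.mem_ofPred_eq, Set.mem_singleton_iff, mem_span_singleton]
    constructor
    · rintro ⟨_, ⟨a, rfl⟩, hav, rfl⟩
      have ha : a ≠ 0 := by rintro rfl; simp at hav
      exact hammingNorm_smul (fun _ ↦ IsSMulRegular.of_ne_zero ha) v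
    · rintro rfl
      exact ⟨v, ⟨1, one_smul F v⟩, hv, rfl⟩
  rw [dmin, hweights, csInf_singleton]

theorem stmt15_general {F : Type*} [Field F] [DecidableEq F]
    (C₁ C₂ C₃ : Submodule F (Fin 4 → F))
    (h1 : C₁ = Submodule.span F {![1, 1, 1, 0], ![0, 0, 0, 1]})
    (h2 : C₂ = C₁)
    (h3 : C₃ = Submodule.span F {![1, 1, 1, 0]}) :
    Module.finrank F C₁ + Module.finrank F C₂ + Module.finrank F C₃ = 5 ∧
    dmin (prodCode F (prodCode F C₁ C₂) C₃) = 3 := by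
  subst h1 h2 h3
  set e : Fin 4 → F := ![1, 1, 1, 0]
  set f : Fin 4 → F := ![0, 0, 0, 1]
  have he : IsIdempotentElem e := by ext i; fin_cases i <;> simp [e]
  have hf : IsIdempotentElem f := by ext i; fin_cases i <;> simp [f]
  have hef : e * f = 0 := by ext i; fin_cases i <;> simp [e, f]
  have he0 : e ≠ 0 := fun h ↦ by simpa [e] using congrFun h 0
  have hf0 : f ≠ 0 := fun h ↦ by simpa [f] using congrFun h 3
  have hweight : hammingNorm e = 3 := by
    simp [hammingNorm, Finset.card_filter, Fin.sum_univ_four, e]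
  constructor
  · rw [finrank_span_pair_of_orthogonal he hf hef he0 hf0, finrank_span_singleton he0]
  · rw [prodCode_eq_mul, prodCode_eq_mul, span_pair_mul_self_of_orthogonal he hf hef,
      span_pair_mul_span_singleton_of_orthogonal he hef, dmin_span_singleton he0, hweight]

theorem stmt15 {F : Type*} [Field F] [Fintype F] [DecidableEq F]
    (C₁ C₂ C₃ : Submodule F (Fin 4 → F))
    (h1 : C₁ = Submodule.span F {![1, 1, 1, 0], ![0, 0, 0, 1]})
    (h2 : C₂ = C₁)
    (h3 : C₃ = Submodule.span F {![1, 1, 1, 0]}) :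
    Module.finrank F C₁ + Module.finrank F C₂ + Module.finrank F C₃ = 5 ∧
    dmin (prodCode F (prodCode F C₁ C₂) C₃) = 3 :=
  stmt15_general C₁ C₂ C₃ h1 h2 h3

end
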